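/- arXiv:1701.07299 — 4 statements merged into one kernel-verified Lean document; each statement's English description precedes it below -/
import Mathlib

section
/- Let P be the polytope of vectors x ∈ [0,1]^n satisfying x_1 = 1, w^T x ≥ b, equality constraints Σ_{i ∈ S_k} x_i = ρ_k for k in a set E, inequality constraints Σ_{i ∈ S_k} x_i ≥ ρ_k for k in a set I, and x_i = 0 for i outside the union of buckets, where S_1,...,S_K,S_∞ are pairwise disjoint subsets of {2,...,n} and w ∈ ℝ^n_{>0}, b ∈ ℝ. Then every extreme point x* of P has at most two fractional components, and if it has exactly two they both lie in the same bucket S_h with h ∈ [K], and their values sum to 1. -/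
/-!
Call a direction neutral if it is supported on the fractional coordinates of `x` and keeps the sum
over every bucket that is tight at `x`. An extreme point `x` of `P` admits no nonzero neutral `d`
with `w ⬝ d = 0`, since `x ± t d` stay in `P` for small `t`, the slack constraints being open
conditions. For neutral `u`, `v` the neutral direction `(w ⬝ v) u - (w ⬝ u) v` is orthogonal to
`w`, so `u i ≠ 0 = v i` forces `v = 0`. A tight bucket has an integral sum, so if it contains a
fractional coordinate it contains a second one; hence every fractional `i` carries a neutral
direction, `e i` or `e i - e i'` inside its tight bucket. Comparing these forces any two fractional
coordinates into one tight bucket, `e r - e q` against `e r - e s` excludes a third one, and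
integrality of that bucket's sum gives `x r + x q = 1`.
-/

open Finset Filter Function Topology

section Integrality

variable {ι : Type*} [DecidableEq ι] {x : ι → ℝ}

theorem exists_sum_eq_intCast_of_subset {s t : Finset ι} {z : ℤ} (hs : ∑ j ∈ s, x j = z)
    (hts : t ⊆ s) (h : ∀ j ∈ s \ t, x j ∈ Set.Icc 0 1 \ Set.Ioo 0 1) :
    ∃ z' : ℤ, ∑ j ∈ t, x j = z' := by
  have h01 : ∀ j ∈ s \ t, x j = 0 ∨ x j = 1 := fun j hj => by
    simpa [Set.Icc_sdiff_Ioo_same zero_le_one] using h j hj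
  have hcard : ∑ j ∈ s \ t, x j = #{j ∈ s \ t | x j = 1} := by
    rw [natCast_card_filter]
    exact sum_congr rfl fun j hj => by rcases h01 j hj with h | h <;> simp [h]
  refine ⟨z - #{j ∈ s \ t | x j = 1}, ?_⟩
  push_cast
  linarith [sum_sdiff hts (f := x)]

theorem exists_ne_mem_Ioo_of_sum_eq_intCast {s : Finset ι} {z : ℤ} (hs : ∑ j ∈ s, x j = z)
    (h01 : ∀ j ∈ s, x j ∈ Set.Icc 0 1) {i : ι} (hi : i ∈ s) (hxi : x i ∈ Set.Ioo 0 1) :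
    ∃ j ∈ s, j ≠ i ∧ x j ∈ Set.Ioo 0 1 := by
  by_contra! hs'
  obtain ⟨z', hz'⟩ := exists_sum_eq_intCast_of_subset hs (singleton_subset_iff.2 hi)
    fun j hj => by
      rw [Finset.mem_sdiff, Finset.mem_singleton] at hj
      exact ⟨h01 j hj.1, hs' j hj.1 hj.2⟩
  rw [sum_singleton] at hz'
  rw [hz'] at hxi
  have h0 : (0 : ℤ) < z' := by exact_mod_cast hxi.1
  have h1 : z' < 1 := by exact_mod_cast hxi.2
  omega

theorem add_eq_one_of_sum_eq_intCast {s : Finset ι} {z : ℤ} (hs : ∑ j ∈ s, x j = z)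
    (h01 : ∀ j ∈ s, x j ∈ Set.Icc 0 1) {r q : ι} (hr : r ∈ s) (hq : q ∈ s) (hrq : r ≠ q)
    (hxr : x r ∈ Set.Ioo 0 1) (hxq : x q ∈ Set.Ioo 0 1)
    (hrest : ∀ j ∈ s, j ≠ r → j ≠ q → x j ∉ Set.Ioo 0 1) : x r + x q = 1 := by
  obtain ⟨z', hz'⟩ := exists_sum_eq_intCast_of_subset hs
    (insert_subset hr (singleton_subset_iff.2 hq)) fun j hj => by
      simp only [Finset.mem_sdiff, Finset.mem_insert, Finset.mem_singleton, not_or] at hj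
      exact ⟨h01 j hj.1, hrest j hj.1 hj.2.1 hj.2.2⟩
  rw [sum_pair hrq] at hz'
  have h0 : (0 : ℤ) < z' := by exact_mod_cast hz' ▸ add_pos hxr.1 hxq.1
  have h2 : z' < 2 := by
    have : x r + x q < 2 := by linarith [hxr.2, hxq.2]
    exact_mod_cast hz' ▸ this
  rw [hz', show z' = 1 by omega, Int.cast_one]

end Integrality

theorem eq_zero_of_eventually_add_smul_mem {E : Type*} [AddCommGroup E] [Module ℝ E]
    {A : Set E} {x d : E} (hx : x ∈ A.extremePoints ℝ) (h : ∀ᶠ t in 𝓝 (0 : ℝ), x + t • d ∈ A) :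
    d = 0 := by
  have hneg : ∀ᶠ t in 𝓝 (0 : ℝ), x + (-t) • d ∈ A :=
    (neg_zero (G := ℝ) ▸ tendsto_neg (0 : ℝ)).eventually h
  obtain ⟨t, ht, h₁, h₂⟩ := (eventually_mem_nhdsWithin.and
    ((h.and hneg).filter_mono nhdsWithin_le_nhds) : ∀ᶠ t in 𝓝[>] (0 : ℝ), _).exists
  have hmid : x ∈ openSegment ℝ (x + t • d) (x + (-t) • d) :=
    ⟨1 / 2, 1 / 2, by norm_num, by norm_num, by norm_num, by module⟩
  have := hx.2 h₁ h₂ hmid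
  rwa [add_eq_left, smul_eq_zero, or_iff_right (ne_of_gt ht)] at this

section BucketPolytope

variable {ι κ : Type*} [Fintype ι] [Finite κ]

def bucketPolytope (w : ι → ℝ) (b : ℝ) (S : κ → Finset ι) (Sinf : Finset ι) (ρ : κ → ℤ)
    (E I : Finset κ) (i₀ : ι) : Set (ι → ℝ) :=
  {x | (∀ i, 0 ≤ x i ∧ x i ≤ 1) ∧ x i₀ = 1 ∧
      b ≤ ∑ i, w i * x i ∧
      (∀ k ∈ E, ∑ i ∈ S k, x i = (ρ k : ℝ)) ∧
      (∀ k ∈ I, (ρ k : ℝ) ≤ ∑ i ∈ S k, x i) ∧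
      (∀ i, i ≠ i₀ → i ∉ Sinf → (∀ k, i ∉ S k) → x i = 0)}

def tightDirections (S : κ → Finset ι) (ρ : κ → ℤ) (x : ι → ℝ) : Submodule ℝ (ι → ℝ) where
  carrier := {d | (∀ i, x i ∉ Set.Ioo 0 1 → d i = 0) ∧
    ∀ k, ∑ i ∈ S k, x i = ρ k → ∑ i ∈ S k, d i = 0}
  zero_mem' := ⟨fun _ _ => rfl, fun _ _ => sum_const_zero⟩
  add_mem' {d e} hd he :=
    ⟨fun i hi => by simp [hd.1 i hi, he.1 i hi],
      fun k hk => by simp [sum_add_distrib, hd.2 k hk, he.2 k hk]⟩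
  smul_mem' c d hd :=
    ⟨fun i hi => by simp [hd.1 i hi], fun k hk => by simp [← mul_sum, hd.2 k hk]⟩

theorem tendsto_add_mul_nhds_zero (u v : ℝ) : Tendsto (fun t => u + t * v) (𝓝 0) (𝓝 u) := by
  simpa using ((tendsto_id (x := 𝓝 (0 : ℝ))).mul_const v).const_add u

theorem eventually_add_smul_mem_bucketPolytope {w : ι → ℝ} {b : ℝ} {S : κ → Finset ι}
    {Sinf : Finset ι} {ρ : κ → ℤ} {E I : Finset κ} {i₀ : ι} {x d : ι → ℝ}
    (hx : x ∈ bucketPolytope w b S Sinf ρ E I i₀) (hd : d ∈ tightDirections S ρ x)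
    (hwd : ∑ i, w i * d i = 0) :
    ∀ᶠ t in 𝓝 (0 : ℝ), x + t • d ∈ bucketPolytope w b S Sinf ρ E I i₀ := by
  obtain ⟨hx01, hx0, hxw, hxE, hxI, hxz⟩ := hx
  obtain ⟨hdfrac, hdtight⟩ := hd
  have hsum : ∀ (c : ι → ℝ) (s : Finset ι) (t : ℝ),
      ∑ i ∈ s, c i * (x + t • d) i = ∑ i ∈ s, c i * x i + t * ∑ i ∈ s, c i * d i := by
    intro c s t
    simp only [Pi.add_apply, Pi.smul_apply, smul_eq_mul, mul_add, sum_add_distrib, mul_sum]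
    simp only [mul_left_comm]
  have hbucket : ∀ k t, ∑ i ∈ S k, (x + t • d) i = ∑ i ∈ S k, x i + t * ∑ i ∈ S k, d i := by
    simpa only [Pi.one_apply, one_mul] using fun k => hsum 1 (S k)
  have hbox : ∀ᶠ t in 𝓝 (0 : ℝ), ∀ i, 0 ≤ (x + t • d) i ∧ (x + t • d) i ≤ 1 := by
    refine eventually_all.2 fun i => ?_
    by_cases hi : x i ∈ Set.Ioo 0 1
    · exact ((tendsto_add_mul_nhds_zero (x i) (d i)).eventually (Ioo_mem_nhds hi.1 hi.2)).mono
        fun t ht => ⟨ht.1.le, ht.2.le⟩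
    · exact .of_forall fun t => by simpa [hdfrac i hi] using hx01 i
  have hslack : ∀ᶠ t in 𝓝 (0 : ℝ), ∀ k ∈ I, (ρ k : ℝ) ≤ ∑ i ∈ S k, (x + t • d) i := by
    refine eventually_all.2 fun k => ?_
    by_cases hk : k ∈ I
    · by_cases htight : ∑ i ∈ S k, x i = ρ k
      · exact .of_forall fun t _ => by
          rw [hbucket, hdtight k htight, mul_zero, add_zero]; exact hxI k hk
      · have hlt := lt_of_le_of_ne (hxI k hk) (Ne.symm htight)
        exact ((tendsto_add_mul_nhds_zero _ _).eventually (Ioi_mem_nhds hlt)).mono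
          fun t ht _ => by rw [hbucket]; exact ht.le
    · exact .of_forall fun _ h => absurd h hk
  filter_upwards [hbox, hslack] with t hbox hslack
  refine ⟨hbox, ?_, ?_, fun k hk => ?_, hslack, fun i hi₀ hiS hik => ?_⟩
  · simp [hx0, hdfrac i₀ (by simp [hx0])]
  · rw [hsum, hwd, mul_zero, add_zero]
    exact hxw
  · rw [hbucket, hdtight k (hxE k hk), mul_zero, add_zero]; exact hxE k hk
  · simp [hxz i hi₀ hiS hik, hdfrac i (by simp [hxz i hi₀ hiS hik])]

end BucketPolytope

theorem eq_zero_of_mem_tightDirections {ι κ : Type*} [Fintype ι] [Finite κ] {w : ι → ℝ} {b : ℝ}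
    {S : κ → Finset ι} {Sinf : Finset ι} {ρ : κ → ℤ} {E I : Finset κ} {i₀ : ι} {x d : ι → ℝ}
    (hx : x ∈ (bucketPolytope w b S Sinf ρ E I i₀).extremePoints ℝ)
    (hd : d ∈ tightDirections S ρ x) (hwd : ∑ i, w i * d i = 0) : d = 0 :=
  eq_zero_of_eventually_add_smul_mem hx (eventually_add_smul_mem_bucketPolytope hx.1 hd hwd)

theorem eq_zero_of_apply_eq_zero {ι κ : Type*} [Fintype ι] {S : κ → Finset ι} {ρ : κ → ℤ}
    {x w : ι → ℝ} (hrigid : ∀ d ∈ tightDirections S ρ x, ∑ i, w i * d i = 0 → d = 0)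
    {u v : ι → ℝ} (hu : u ∈ tightDirections S ρ x) (hv : v ∈ tightDirections S ρ x) {i : ι}
    (hui : u i ≠ 0) (hvi : v i = 0) : v = 0 := by
  set a := ∑ j, w j * u j
  set c := ∑ j, w j * v j
  have hd : c • u - a • v = 0 := by
    refine hrigid _ (sub_mem (Submodule.smul_mem _ _ hu) (Submodule.smul_mem _ _ hv)) ?_
    simp only [Pi.sub_apply, Pi.smul_apply, smul_eq_mul, mul_sub, sum_sub_distrib,
      mul_left_comm _ c, mul_left_comm _ a, ← mul_sum]
    ring
  have hc : c = 0 := by simpa [hvi, hui] using congrFun hd i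
  exact hrigid v hv hc

section Rigidity

variable {ι κ : Type*} [DecidableEq ι] {S : κ → Finset ι} {ρ : κ → ℤ} {x : ι → ℝ}

theorem single_mem_tightDirections {i : ι} (hi : x i ∈ Set.Ioo 0 1)
    (hfree : ∀ k, ∑ j ∈ S k, x j = ρ k → i ∉ S k) : Pi.single i 1 ∈ tightDirections S ρ x :=
  ⟨fun j hj => Pi.single_eq_of_ne (by rintro rfl; exact hj hi) _,
    fun k hk => by rw [sum_pi_single', if_neg (hfree k hk)]⟩

theorem single_sub_single_mem_tightDirections (hS : Pairwise (Disjoint on S)) {i j : ι} {k : κ}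
    (hik : i ∈ S k) (hjk : j ∈ S k) (hi : x i ∈ Set.Ioo 0 1) (hj : x j ∈ Set.Ioo 0 1) :
    Pi.single i 1 - Pi.single j 1 ∈ tightDirections S ρ x := by
  have hmem : ∀ k', i ∈ S k' ↔ j ∈ S k' := fun k' => by
    rcases eq_or_ne k k' with rfl | hne
    · simp [hik, hjk]
    · simp [disjoint_left.1 (hS hne) hik, disjoint_left.1 (hS hne) hjk]
  refine ⟨fun l hl => ?_, fun k' _ => by simp [sum_sub_distrib, sum_pi_single', hmem]⟩
  have hli : l ≠ i := by rintro rfl; exact hl hi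
  have hlj : l ≠ j := by rintro rfl; exact hl hj
  simp [hli, hlj]

theorem exists_mem_tightDirections_apply_ne_zero (hS : Pairwise (Disjoint on S))
    (h01 : ∀ j, x j ∈ Set.Icc 0 1) {i : ι} (hi : x i ∈ Set.Ioo 0 1) :
    ∃ v ∈ tightDirections S ρ x, v i ≠ 0 ∧
      ∀ j ≠ i, v j ≠ 0 → ∃ k, ∑ l ∈ S k, x l = ρ k ∧ i ∈ S k ∧ j ∈ S k := by
  by_cases htight : ∃ k, ∑ l ∈ S k, x l = ρ k ∧ i ∈ S k
  · obtain ⟨k, hk, hik⟩ := htight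
    obtain ⟨i', hi'k, hi'i, hi'⟩ :=
      exists_ne_mem_Ioo_of_sum_eq_intCast hk (fun j _ => h01 j) hik hi
    refine ⟨_, single_sub_single_mem_tightDirections hS hik hi'k hi hi', by simp [hi'i.symm],
      fun j hji hj => ⟨k, hk, hik, ?_⟩⟩
    obtain rfl : j = i' := by_contra fun hji' => hj (by simp [hji, hji'])
    exact hi'k
  · push Not at htight
    exact ⟨_, single_mem_tightDirections hi htight, by simp, fun j hji hj => by simp [hji] at hj⟩

variable [Fintype ι] {w : ι → ℝ}

theorem exists_tight_mem_mem_of_mem_Ioo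
    (hrigid : ∀ d ∈ tightDirections S ρ x, ∑ i, w i * d i = 0 → d = 0)
    (hS : Pairwise (Disjoint on S)) (h01 : ∀ j, x j ∈ Set.Icc 0 1) {r q : ι} (hrq : r ≠ q)
    (hr : x r ∈ Set.Ioo 0 1) (hq : x q ∈ Set.Ioo 0 1) :
    ∃ k, ∑ l ∈ S k, x l = ρ k ∧ r ∈ S k ∧ q ∈ S k := by
  by_contra hnone
  obtain ⟨u, hu, huq, -⟩ := exists_mem_tightDirections_apply_ne_zero hS h01 hq
  obtain ⟨v, hv, hvr, hvsupp⟩ := exists_mem_tightDirections_apply_ne_zero hS h01 hr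
  have hvq : v q = 0 := by_contra fun h => hnone (hvsupp q hrq.symm h)
  exact hvr (by rw [eq_zero_of_apply_eq_zero hrigid hu hv huq hvq, Pi.zero_apply])

theorem not_three_mem_Ioo
    (hrigid : ∀ d ∈ tightDirections S ρ x, ∑ i, w i * d i = 0 → d = 0)
    (hS : Pairwise (Disjoint on S)) (h01 : ∀ j, x j ∈ Set.Icc 0 1) {r q s : ι} (hrq : r ≠ q)
    (hrs : r ≠ s) (hqs : q ≠ s) (hr : x r ∈ Set.Ioo 0 1) (hq : x q ∈ Set.Ioo 0 1)
    (hs : x s ∈ Set.Ioo 0 1) : False := by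
  obtain ⟨k, -, hrk, hqk⟩ := exists_tight_mem_mem_of_mem_Ioo hrigid hS h01 hrq hr hq
  obtain ⟨k', -, hrk', hsk'⟩ := exists_tight_mem_mem_of_mem_Ioo hrigid hS h01 hrs hr hs
  have h := eq_zero_of_apply_eq_zero hrigid (i := q)
    (single_sub_single_mem_tightDirections hS hrk hqk hr hq)
    (single_sub_single_mem_tightDirections hS hrk' hsk' hr hs)
    (by simp [hrq.symm]) (by simp [hrq.symm, hqs])
  simpa [hrs.symm] using congrFun h s

end Rigidity

/-- Item `1` of the paper is `0 : Fin (n + 1)`. -/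
theorem extreme_point_fractional_structure_general
    (n K : ℕ) (w : Fin (n + 1) → ℝ) (b : ℝ)
    (S : Fin K → Finset (Fin (n + 1))) (Sinf : Finset (Fin (n + 1)))
    (hdisj : ∀ k k', k ≠ k' → Disjoint (S k) (S k'))
    (ρ : Fin K → ℤ)
    (E I : Finset (Fin K))
    (P : Set (Fin (n + 1) → ℝ))
    (hP : P = {x | (∀ i, 0 ≤ x i ∧ x i ≤ 1) ∧ x 0 = 1 ∧
      b ≤ ∑ i, w i * x i ∧
      (∀ k ∈ E, ∑ i ∈ S k, x i = (ρ k : ℝ)) ∧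
      (∀ k ∈ I, (ρ k : ℝ) ≤ ∑ i ∈ S k, x i) ∧
      (∀ i : Fin (n + 1), i ≠ 0 → i ∉ Sinf → (∀ k, i ∉ S k) → x i = 0)})
    (x : Fin (n + 1) → ℝ) (hx : x ∈ Set.extremePoints ℝ P) :
    Set.ncard {i | 0 < x i ∧ x i < 1} ≤ 2 ∧
    (∀ r q : Fin (n + 1), r ≠ q → 0 < x r → x r < 1 → 0 < x q → x q < 1 →
      (∃ h : Fin K, r ∈ S h ∧ q ∈ S h) ∧ x r + x q = 1) := by
  subst hP
  have h01 : ∀ i, x i ∈ Set.Icc 0 1 := hx.1.1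
  have hrigid : ∀ d ∈ tightDirections S ρ x, ∑ i, w i * d i = 0 → d = 0 := fun d =>
    eq_zero_of_mem_tightDirections (E := E) (I := I) (Sinf := Sinf) (b := b) (i₀ := 0) hx
  refine ⟨?_, fun r q hrq hr₀ hr₁ hq₀ hq₁ => ?_⟩
  · by_contra! h
    obtain ⟨r, q, s, hr, hq, hs, hrq, hrs, hqs⟩ := (Set.two_lt_ncard_iff (Set.toFinite _)).1 h
    exact not_three_mem_Ioo hrigid hdisj h01 hrq hrs hqs hr hq hs
  · obtain ⟨k, hk, hrk, hqk⟩ :=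
      exists_tight_mem_mem_of_mem_Ioo hrigid hdisj h01 hrq ⟨hr₀, hr₁⟩ ⟨hq₀, hq₁⟩
    exact ⟨⟨k, hrk, hqk⟩, add_eq_one_of_sum_eq_intCast hk (fun j _ => h01 j) hrk hqk hrq
      ⟨hr₀, hr₁⟩ ⟨hq₀, hq₁⟩ fun j _ hjr hjq hj =>
        not_three_mem_Ioo hrigid hdisj h01 hrq hjr.symm hjq.symm ⟨hr₀, hr₁⟩ ⟨hq₀, hq₁⟩ hj⟩

/-- Extreme points of the bucketed min-knapsack polytope `P(S, ρ)` have at most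
two fractional components; if there are exactly two, they lie in a common
bucket `S_h` with `h ∈ [K]` and their values sum to `1`.
Items are indexed by `Fin (n+1)`, with `0` playing the role of item `1`. -/
theorem extreme_point_fractional_structure
    (n K : ℕ) (w : Fin (n + 1) → ℝ) (hw : ∀ i, 0 < w i) (b : ℝ)
    (S : Fin K → Finset (Fin (n + 1))) (Sinf : Finset (Fin (n + 1)))
    (hS1 : ∀ k, (0 : Fin (n + 1)) ∉ S k) (hSinf1 : (0 : Fin (n + 1)) ∉ Sinf)
    (hdisj : ∀ k k', k ≠ k' → Disjoint (S k) (S k'))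
    (hdisjinf : ∀ k, Disjoint (S k) Sinf)
    (ρ : Fin K → ℤ) (hρ : ∀ k, 1 ≤ ρ k)
    (E I : Finset (Fin K)) (hEI : E ∪ I = Finset.univ)
    (P : Set (Fin (n + 1) → ℝ))
    (hP : P = {x | (∀ i, 0 ≤ x i ∧ x i ≤ 1) ∧ x 0 = 1 ∧
      b ≤ ∑ i, w i * x i ∧
      (∀ k ∈ E, ∑ i ∈ S k, x i = (ρ k : ℝ)) ∧
      (∀ k ∈ I, (ρ k : ℝ) ≤ ∑ i ∈ S k, x i) ∧
      (∀ i : Fin (n + 1), i ≠ 0 → i ∉ Sinf → (∀ k, i ∉ S k) → x i = 0)})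
    (x : Fin (n + 1) → ℝ) (hx : x ∈ Set.extremePoints ℝ P) :
    Set.ncard {i | 0 < x i ∧ x i < 1} ≤ 2 ∧
    (∀ r q : Fin (n + 1), r ≠ q → 0 < x r → x r < 1 → 0 < x q → x q < 1 →
      (∃ h : Fin K, r ∈ S h ∧ q ∈ S h) ∧ x r + x q = 1) :=
  extreme_point_fractional_structure_general n K w b S Sinf hdisj ρ E I P hP x hx
end

section
/- Let x ∈ [0,1]^n with w^T x ≥ b, and suppose x has exactly two fractional components r, q with x_r + x_q = 1 and w_r ≥ w_q > 0. Then the vector x̄ obtained by setting x̄_r = 1 and x̄_q = 0 is in {0,1}^n, satisfies w^T x̄ ≥ b, and for any nonnegative cost vector c with c_r ≥ c_q, c^T x̄ - c^T x ≤ c_r - c_q. -/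
open Finset

/-! Rounding changes the linear form `v ⬝ᵥ x` by exactly `(v r - v q) * x q`, because the mass
`x q = 1 - x r` moves from coordinate `q` to coordinate `r`. For `v = w` this is nonnegative, as
`w r ≥ w q`; for `v = c` it is at most `c r - c q`, as `x q ≤ 1`. -/

section Update

variable {ι : Type*} [DecidableEq ι]

theorem update_update_mem {α : Type*} {S : Set α} {x : ι → α} {r q : ι} {a b : α}
    (hx : ∀ i, i ≠ r → i ≠ q → x i ∈ S) (ha : a ∈ S) (hb : b ∈ S) (i : ι) :
    Function.update (Function.update x r a) q b i ∈ S := by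
  rcases eq_or_ne i q with rfl | hiq
  · simpa using hb
  rcases eq_or_ne i r with rfl | hir
  · simpa [hiq] using ha
  simpa [hiq, hir] using hx i hir hiq

variable [Fintype ι] {R : Type*} [CommRing R]

theorem sum_mul_update (v x : ι → R) (i : ι) (a : R) :
    ∑ j, v j * Function.update x i a j = ∑ j, v j * x j + v i * (a - x i) := by
  change v ⬝ᵥ _ = v ⬝ᵥ x + _
  rw [Pi.update_eq_sub_add_single, dotProduct_add, dotProduct_sub, dotProduct_single,
    dotProduct_single]
  ring

theorem sum_mul_update_update (v x : ι → R) {r q : ι} (hrq : r ≠ q) (a b : R) :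
    ∑ j, v j * Function.update (Function.update x r a) q b j =
      ∑ j, v j * x j + v r * (a - x r) + v q * (b - x q) := by
  rw [sum_mul_update, sum_mul_update, Function.update_of_ne hrq.symm]

theorem sum_mul_round_pair (v x : ι → R) {r q : ι} (hrq : r ≠ q) (hsum : x r + x q = 1) :
    ∑ j, v j * Function.update (Function.update x r 1) q 0 j =
      ∑ j, v j * x j + (v r - v q) * x q := by
  rw [sum_mul_update_update v x hrq, ← hsum]
  ring

end Update

theorem round_two_fractional_general (n : ℕ) (w c x : Fin n → ℝ) (b : ℝ)
    (hb : b ≤ ∑ i, w i * x i)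
    (r q : Fin n) (hrq : r ≠ q)
    (hq : 0 < x q ∧ x q < 1)
    (hsum : x r + x q = 1) (hwrq : w q ≤ w r) (hcrq : c q ≤ c r)
    (honly : ∀ i, i ≠ r → i ≠ q → x i = 0 ∨ x i = 1) :
    (∀ i, Function.update (Function.update x r 1) q 0 i = 0 ∨
          Function.update (Function.update x r 1) q 0 i = 1) ∧
    (b ≤ ∑ i, w i * Function.update (Function.update x r 1) q 0 i) ∧
    (∑ i, c i * Function.update (Function.update x r 1) q 0 i) - (∑ i, c i * x i)
      ≤ c r - c q := by
  refine ⟨update_update_mem (S := {0, 1}) honly (by simp) (by simp), ?_, ?_⟩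
  · rw [sum_mul_round_pair w x hrq hsum]
    linarith [mul_nonneg (sub_nonneg.mpr hwrq) hq.1.le]
  · rw [sum_mul_round_pair c x hrq hsum, add_sub_cancel_left]
    exact mul_le_of_le_one_right (sub_nonneg.mpr hcrq) hq.2.le

/-- Rounding the two fractional components `r, q` (with `x_r + x_q = 1`,
`w_r ≥ w_q`) of a feasible point by setting `x̄_r = 1`, `x̄_q = 0` keeps it
feasible, makes it integral, and increases the cost by at most `c_r - c_q`. -/
theorem round_two_fractional (n : ℕ) (w c x : Fin n → ℝ) (b : ℝ)
    (hw : ∀ i, 0 < w i) (hc : ∀ i, 0 ≤ c i)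
    (hx01 : ∀ i, 0 ≤ x i ∧ x i ≤ 1)
    (hb : b ≤ ∑ i, w i * x i)
    (r q : Fin n) (hrq : r ≠ q)
    (hr : 0 < x r ∧ x r < 1) (hq : 0 < x q ∧ x q < 1)
    (hsum : x r + x q = 1) (hwrq : w q ≤ w r) (hcrq : c q ≤ c r)
    (honly : ∀ i, i ≠ r → i ≠ q → x i = 0 ∨ x i = 1) :
    (∀ i, Function.update (Function.update x r 1) q 0 i = 0 ∨
          Function.update (Function.update x r 1) q 0 i = 1) ∧
    (b ≤ ∑ i, w i * Function.update (Function.update x r 1) q 0 i) ∧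
    (∑ i, c i * Function.update (Function.update x r 1) q 0 i) - (∑ i, c i * x i)
      ≤ c r - c q :=
  round_two_fractional_general n w c x b hb r q hrq hq hsum hwrq hcrq honly
end

section
/- Let ε > 0, C_ε = ⌈log_{1+ε}(1/ε)⌉, and let x̂ ∈ {0,1}^n be any vector with x̂_1 = 1, with costs 1 = c_1 ≥ c_2 ≥ ... ≥ c_n > 0. Then there exists a sequence τ = (τ_1,...,τ_m) of nonnegative integers with m ≤ ⌈2√C_ε⌉, τ_{k+1} ≥ τ_k + k for all k < m, and τ_m ≤ C_ε − 1, such that every index i ≥ 2 with x̂_i = 1 and c_i > (1+ε)^{-C_ε} satisfies (1+ε)^{-(τ_k+k)} < c_i ≤ (1+ε)^{-τ_k} for some k ∈ [m]. -/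
/-!
The buckets can be chosen independently of `x̂` and `c`: take `τ_k` to be the triangular
numbers `0, 1, 3, 6, …`. Bucket `k` then is the union of the unit buckets
`((1+ε)^{-(j+1)}, (1+ε)^{-j}]` for `τ_k ≤ j < τ_k + k`, so consecutive buckets tile the range
of exponents, and any cost in `((1+ε)^{-C}, 1]` lies in a unit bucket with `j < C`. Using the
least `m` whose buckets reach exponent `C`, the last start `τ_m` is below `C`, and since
`τ_m ≈ m²/2` this forces `m ≤ ⌈2√C⌉`.
-/

theorem Nat.exists_lt_and_not_succ {P : ℕ → Prop} {N : ℕ} (h0 : P 0) (hN : ¬ P N) :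
    ∃ j < N, P j ∧ ¬ P (j + 1) := by
  induction N with
  | zero => exact absurd h0 hN
  | succ N ih =>
    by_cases hP : P N
    · exact ⟨N, lt_add_one N, hP, hN⟩
    · obtain ⟨j, hj, hPj⟩ := ih hP
      exact ⟨j, hj.trans (lt_add_one N), hPj⟩

theorem exists_lt_zpow_neg_bucket {α : Type*} [DivInvMonoid α] [LinearOrder α] {a v : α}
    {N : ℕ} (hv : v ≤ 1) (hN : a ^ (-(N : ℤ)) < v) :
    ∃ j < N, a ^ (-((j : ℤ) + 1)) < v ∧ v ≤ a ^ (-(j : ℤ)) := by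
  obtain ⟨j, hjN, hj, hj'⟩ := Nat.exists_lt_and_not_succ (P := fun j : ℕ => v ≤ a ^ (-(j : ℤ)))
    (by simpa using hv) (not_le.2 hN)
  exact ⟨j, hjN, by simpa using hj', hj⟩

theorem List.getD_map_range_of_lt {α : Type*} {f : ℕ → α} {m k : ℕ} (d : α) (hk : k < m) :
    ((List.range m).map f).getD k d = f k := by
  simp [List.getD_eq_getElem?_getD, hk]

def triangular : ℕ → ℕ
  | 0 => 0
  | k + 1 => triangular k + (k + 1)

theorem triangular_succ (k : ℕ) : triangular (k + 1) = triangular k + (k + 1) := rfl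

theorem two_mul_triangular (k : ℕ) : 2 * triangular k = k * (k + 1) := by
  induction k with
  | zero => rfl
  | succ k ih => rw [triangular_succ, mul_add, ih]; ring

theorem le_triangular_self (k : ℕ) : k ≤ triangular k := by
  cases k with
  | zero => rfl
  | succ k => exact Nat.le_add_left _ _

theorem exists_triangular_bucket {m j : ℕ} (hj : j < triangular m) :
    ∃ k < m, triangular k ≤ j ∧ j < triangular (k + 1) := by
  obtain ⟨k, hkm, hk, hk'⟩ := Nat.exists_lt_and_not_succ (P := fun k => triangular k ≤ j)
    (Nat.zero_le j) (not_le.2 hj)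
  exact ⟨k, hkm, hk, not_le.1 hk'⟩

theorem exists_min_triangular_ge (C : ℕ) :
    ∃ m, C ≤ triangular m ∧ ∀ k < m, triangular k < C := by
  have h : ∃ m, C ≤ triangular m := ⟨C, le_triangular_self C⟩
  exact ⟨Nat.find h, Nat.find_spec h, fun k hk => not_le.1 (Nat.find_min h hk)⟩

theorem succ_le_ceil_two_mul_sqrt_of_triangular_lt {k C : ℕ} (h : triangular k < C) :
    k + 1 ≤ ⌈2 * √(C : ℝ)⌉₊ := by
  have hkk : ((k * k : ℕ) : ℝ) < 4 * C := by
    exact_mod_cast (by nlinarith [two_mul_triangular k] : k * k < 4 * C)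
  push_cast at hkk
  have hk : (k : ℝ) < 2 * √(C : ℝ) := by
    nlinarith [Real.sq_sqrt (Nat.cast_nonneg (α := ℝ) C), Real.sqrt_nonneg (C : ℝ)]
  exact Nat.lt_ceil.2 hk

/-- Items are indexed by `Fin (n+1)` with `0` playing the role of item `1`; `τ` is a 0-indexed
list, so `τ.getD (k-1) 0` is `τ_k`. -/
theorem covering_lemma_general (n : ℕ) (ε : ℝ) (hε : 0 < ε)
    (c : Fin (n + 1) → ℝ) (hc1 : c 0 = 1)
    (hcsorted : ∀ i j : Fin (n + 1), i ≤ j → c j ≤ c i)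
    (x : Fin (n + 1) → ℝ) :
    ∃ τ : List ℕ,
      τ.length ≤ ⌈2 * Real.sqrt (⌈Real.logb (1 + ε) (1 / ε)⌉₊ : ℝ)⌉₊ ∧
      (∀ k, k + 1 < τ.length → τ.getD k 0 + (k + 1) ≤ τ.getD (k + 1) 0) ∧
      (∀ l ∈ τ.getLast?, l ≤ ⌈Real.logb (1 + ε) (1 / ε)⌉₊ - 1) ∧
      (∀ i : Fin (n + 1), i ≠ 0 → x i = 1 →
        ((1 + ε) : ℝ) ^ (-(⌈Real.logb (1 + ε) (1 / ε)⌉₊ : ℤ)) < c i →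
        ∃ k < τ.length,
          ((1 + ε) : ℝ) ^ (-((τ.getD k 0 : ℤ) + (k + 1))) < c i ∧
          c i ≤ ((1 + ε) : ℝ) ^ (-(τ.getD k 0 : ℤ))) := by
  obtain ⟨m, hCm, hm⟩ := exists_min_triangular_ge ⌈Real.logb (1 + ε) (1 / ε)⌉₊
  have hτ : ∀ k < m, ((List.range m).map triangular).getD k 0 = triangular k :=
    fun k hk => List.getD_map_range_of_lt 0 hk
  refine ⟨(List.range m).map triangular, ?_, ?_, ?_, ?_⟩
  · cases m with
    | zero => simp
    | succ k => simpa using succ_le_ceil_two_mul_sqrt_of_triangular_lt (hm k (lt_add_one k))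
  · intro k hk
    rw [List.length_map, List.length_range] at hk
    rw [hτ k (by omega), hτ (k + 1) hk, triangular_succ]
  · intro l hl
    obtain ⟨k, hk, rfl⟩ := List.mem_map.1 (List.mem_of_mem_getLast? hl)
    have := hm k (List.mem_range.1 hk)
    omega
  · intro i _ _ hci
    have hci1 : c i ≤ 1 := hc1 ▸ hcsorted 0 i (Fin.zero_le i)
    obtain ⟨j, hjC, hj⟩ := exists_lt_zpow_neg_bucket hci1 hci
    obtain ⟨k, hkm, hkj, hjk⟩ := exists_triangular_bucket (hjC.trans_le hCm)
    rw [triangular_succ] at hjk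
    refine ⟨k, by simpa using hkm, ?_⟩
    rw [hτ k hkm]
    have ha : (1 : ℝ) ≤ 1 + ε := by linarith
    exact Set.Ioc_subset_Ioc (zpow_le_zpow_right₀ ha (by omega))
      (zpow_le_zpow_right₀ ha (by omega)) hj

/-- Covering lemma: for any 0/1 vector `x̂` with `x̂_1 = 1` and sorted costs
`1 = c_1 ≥ c_2 ≥ … ≥ c_n > 0`, there is a sequence `τ` of length at most
`⌈2√C_ε⌉` with `τ_{k+1} ≥ τ_k + k` and `τ_m ≤ C_ε - 1` whose buckets
`((1+ε)^{-(τ_k+k)}, (1+ε)^{-τ_k}]` cover all selected items of cost above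
`(1+ε)^{-C_ε}`. Items are indexed by `Fin (n+1)` with `0` playing the role
of item `1`; `τ` is a 0-indexed list, so `τ.getD (k-1) 0` is `τ_k`. -/
theorem covering_lemma (n : ℕ) (ε : ℝ) (hε : 0 < ε)
    (c : Fin (n + 1) → ℝ) (hcpos : ∀ i, 0 < c i) (hc1 : c 0 = 1)
    (hcsorted : ∀ i j : Fin (n + 1), i ≤ j → c j ≤ c i)
    (x : Fin (n + 1) → ℝ) (hbin : ∀ i, x i = 0 ∨ x i = 1) (hx1 : x 0 = 1) :
    ∃ τ : List ℕ,
      τ.length ≤ ⌈2 * Real.sqrt (⌈Real.logb (1 + ε) (1 / ε)⌉₊ : ℝ)⌉₊ ∧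
      (∀ k, k + 1 < τ.length → τ.getD k 0 + (k + 1) ≤ τ.getD (k + 1) 0) ∧
      (∀ l ∈ τ.getLast?, l ≤ ⌈Real.logb (1 + ε) (1 / ε)⌉₊ - 1) ∧
      (∀ i : Fin (n + 1), i ≠ 0 → x i = 1 →
        ((1 + ε) : ℝ) ^ (-(⌈Real.logb (1 + ε) (1 / ε)⌉₊ : ℤ)) < c i →
        ∃ k < τ.length,
          ((1 + ε) : ℝ) ^ (-((τ.getD k 0 : ℤ) + (k + 1))) < c i ∧
          c i ≤ ((1 + ε) : ℝ) ^ (-(τ.getD k 0 : ℤ))) :=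
  covering_lemma_general n ε hε c hc1 hcsorted x
end

section
/- There exists a strict approximation-preserving reduction from the general incremental knapsack problem (IK) with discounts Δ_t to IIK, obtained by replicating each time t exactly Δ_t times: given an IK instance (n, p, w, T, b, Δ) with Δ_t ∈ ℤ_{>0}, define T' = Σ_t Δ_t and capacities b'_{t'} = b_t for δ_t + 1 ≤ t' ≤ δ_t + Δ_t where δ_t = Σ_{s<t} Δ_s. Then: (a) for every feasible IK solution x with objective Σ_t Δ_t p^T x_t there is a feasible IIK solution x' with Σ_{t'} p^T x'_{t'} equal to the IK objective of x; (b) for every feasible IIK solution x̂, the solution x̄_t := x̂_{δ_t + Δ_t} is feasible for IK and has IK objective at least Σ_{t'} p^T x̂_{t'}. -/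
open Finset

/-
Time `t` of the IK instance becomes the block `Ioc δ_t (δ_t + Δ_t)` of IIK times, and these blocks
partition `Icc 1 T'`. Spreading an IK solution constantly over the blocks reproduces the weighted
objective exactly; conversely, by monotonicity the last time of a block dominates every time in it,
so reading an IIK solution at block ends loses nothing.
-/

lemma monotoneOn_Icc_of_le_add_one {β : Type*} [Preorder β] {f : ℕ → β} {N : ℕ}
    (h : ∀ t, 1 ≤ t → t < N → f t ≤ f (t + 1)) : MonotoneOn f (Set.Icc 1 N) :=
  monotoneOn_of_le_add_one Set.ordConnected_Icc fun t _ ht ht' => h t ht.1 ht'.2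

section Blocks

variable (Δ : ℕ → ℕ)

lemma monotone_sum_Icc_one : Monotone fun t => ∑ s ∈ Icc 1 t, Δ s :=
  fun _ _ h => sum_le_sum_of_subset (Icc_subset_Icc_right h)

lemma sum_Icc_one_sub_one_add {t : ℕ} (ht : 1 ≤ t) :
    ∑ s ∈ Icc 1 (t - 1), Δ s + Δ t = ∑ s ∈ Icc 1 t, Δ s := by
  obtain ⟨u, rfl⟩ : ∃ u, t = u + 1 := ⟨t - 1, by omega⟩
  rw [sum_Icc_succ_top (by omega), Nat.add_sub_cancel]

lemma card_Ioc_sum_Icc_one {t : ℕ} (ht : 1 ≤ t) :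
    #(Ioc (∑ s ∈ Icc 1 (t - 1), Δ s) (∑ s ∈ Icc 1 t, Δ s)) = Δ t := by
  rw [Nat.card_Ioc, ← sum_Icc_one_sub_one_add Δ ht, Nat.add_sub_cancel_left]

lemma exists_mem_Ioc_of_mem_Icc {T t' : ℕ} (ht' : t' ∈ Icc 1 (∑ s ∈ Icc 1 T, Δ s)) :
    ∃ t ∈ Icc 1 T, t' ∈ Ioc (∑ s ∈ Icc 1 (t - 1), Δ s) (∑ s ∈ Icc 1 t, Δ s) := by
  induction T with
  | zero => simp at ht'
  | succ T ih =>
    rw [mem_Icc] at ht'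
    by_cases hle : t' ≤ ∑ s ∈ Icc 1 T, Δ s
    · obtain ⟨t, ht, ht'⟩ := ih (mem_Icc.2 ⟨ht'.1, hle⟩)
      exact ⟨t, mem_Icc.2 ⟨(mem_Icc.1 ht).1, (mem_Icc.1 ht).2.trans T.le_succ⟩, ht'⟩
    · exact ⟨T + 1, mem_Icc.2 ⟨by omega, le_rfl⟩, mem_Ioc.2 ⟨by simpa using hle, ht'.2⟩⟩

lemma sum_Icc_sum_Icc_one_eq_sum_sum_Ioc {M : Type*} [AddCommMonoid M] (f : ℕ → M) (T : ℕ) :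
    ∑ t' ∈ Icc 1 (∑ s ∈ Icc 1 T, Δ s), f t' =
      ∑ t ∈ Icc 1 T, ∑ t' ∈ Ioc (∑ s ∈ Icc 1 (t - 1), Δ s) (∑ s ∈ Icc 1 t, Δ s), f t' := by
  have hIcc : ∀ N, Icc 1 N = Ioc 0 N := fun N => by ext; simp only [mem_Icc, mem_Ioc]; omega
  induction T with
  | zero => simp
  | succ T ih =>
    have hsplit := sum_Ioc_consecutive f (Nat.zero_le _) (monotone_sum_Icc_one Δ T.le_succ)
    rw [← hIcc, ← hIcc] at hsplit
    rw [sum_Icc_succ_top (M := M) (by omega), ← ih, Nat.add_sub_cancel, hsplit]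

lemma sum_Icc_one_sub_one_add_mem_Icc {T t : ℕ} (ht : t ∈ Icc 1 T) (hΔt : 0 < Δ t) :
    ∑ s ∈ Icc 1 (t - 1), Δ s + Δ t ∈ Icc 1 (∑ s ∈ Icc 1 T, Δ s) := by
  have hle : ∑ s ∈ Icc 1 t, Δ s ≤ ∑ s ∈ Icc 1 T, Δ s := monotone_sum_Icc_one Δ (mem_Icc.1 ht).2
  rw [← sum_Icc_one_sub_one_add Δ (mem_Icc.1 ht).1] at hle
  rw [mem_Icc]
  omega

noncomputable def blockIndex (t' : ℕ) : ℕ := sInf {t | t' ≤ ∑ s ∈ Icc 1 t, Δ s}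

lemma blockIndex_eq_of_mem_Ioc {t t' : ℕ}
    (ht' : t' ∈ Ioc (∑ s ∈ Icc 1 (t - 1), Δ s) (∑ s ∈ Icc 1 t, Δ s)) : blockIndex Δ t' = t := by
  rw [mem_Ioc] at ht'
  refine le_antisymm (Nat.sInf_le ht'.2) (Nat.le_of_pred_lt ?_)
  by_contra! hlt
  have hmem : t' ≤ ∑ s ∈ Icc 1 (blockIndex Δ t'), Δ s :=
    Nat.sInf_mem (s := {t | t' ≤ ∑ s ∈ Icc 1 t, Δ s}) ⟨t, ht'.2⟩
  have : ∑ s ∈ Icc 1 (blockIndex Δ t'), Δ s ≤ ∑ s ∈ Icc 1 (t - 1), Δ s :=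
    monotone_sum_Icc_one Δ hlt
  omega

lemma blockIndex_mem_Icc {T t' : ℕ} (ht' : t' ∈ Icc 1 (∑ s ∈ Icc 1 T, Δ s)) :
    blockIndex Δ t' ∈ Icc 1 T := by
  obtain ⟨t, ht, hblock⟩ := exists_mem_Ioc_of_mem_Icc Δ ht'
  rwa [blockIndex_eq_of_mem_Ioc Δ hblock]

lemma monotoneOn_blockIndex (T : ℕ) :
    MonotoneOn (blockIndex Δ) (Set.Icc 1 (∑ s ∈ Icc 1 T, Δ s)) := by
  intro a _ b hb hab
  obtain ⟨t, -, hblock⟩ := exists_mem_Ioc_of_mem_Icc Δ (mem_Icc.2 hb)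
  rw [blockIndex_eq_of_mem_Ioc Δ hblock]
  exact Nat.sInf_le (hab.trans (mem_Ioc.1 hblock).2)

lemma sum_Icc_comp_blockIndex {M : Type*} [AddCommMonoid M] (f : ℕ → M) (T : ℕ) :
    ∑ t' ∈ Icc 1 (∑ s ∈ Icc 1 T, Δ s), f (blockIndex Δ t') = ∑ t ∈ Icc 1 T, Δ t • f t := by
  rw [sum_Icc_sum_Icc_one_eq_sum_sum_Ioc]
  refine sum_congr rfl fun t ht => ?_
  rw [sum_congr rfl fun t' ht' => congrArg f (blockIndex_eq_of_mem_Ioc Δ ht'), sum_const,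
    card_Ioc_sum_Icc_one Δ (mem_Icc.1 ht).1]

lemma sum_Icc_le_sum_smul_of_monotoneOn {M : Type*} [AddCommMonoid M] [PartialOrder M]
    [IsOrderedAddMonoid M] {f : ℕ → M} {T : ℕ}
    (hf : MonotoneOn f (Set.Icc 1 (∑ s ∈ Icc 1 T, Δ s))) :
    ∑ t' ∈ Icc 1 (∑ s ∈ Icc 1 T, Δ s), f t' ≤ ∑ t ∈ Icc 1 T, Δ t • f (∑ s ∈ Icc 1 t, Δ s) := by
  rw [sum_Icc_sum_Icc_one_eq_sum_sum_Ioc]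
  refine sum_le_sum fun t ht => ?_
  have hle : ∑ s ∈ Icc 1 t, Δ s ≤ ∑ s ∈ Icc 1 T, Δ s := monotone_sum_Icc_one Δ (mem_Icc.1 ht).2
  rw [← card_Ioc_sum_Icc_one Δ (mem_Icc.1 ht).1]
  refine sum_le_card_nsmul _ _ _ fun t' ht' => ?_
  rw [mem_Ioc] at ht'
  exact hf ⟨by omega, by omega⟩ ⟨by omega, hle⟩ ht'.2

end Blocks

theorem IK_to_IIK_reduction_general (n T : ℕ) (p w : Fin n → ℝ) (b : ℕ → ℝ)
    (hp : ∀ i, 0 < p i)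
    (Δ : ℕ → ℕ) (hΔ : ∀ t ∈ Finset.Icc 1 T, 0 < Δ t)
    (b' : ℕ → ℝ)
    (hb' : ∀ t ∈ Finset.Icc 1 T, ∀ t',
      (∑ s ∈ Finset.Icc 1 (t - 1), Δ s) + 1 ≤ t' →
      t' ≤ (∑ s ∈ Finset.Icc 1 (t - 1), Δ s) + Δ t → b' t' = b t) :
    -- (a)
    (∀ x : ℕ → Fin n → ℝ,
      (∀ t ∈ Finset.Icc 1 T, ∀ i, x t i = 0 ∨ x t i = 1) →
      (∀ t, 1 ≤ t → t < T → ∀ i, x t i ≤ x (t + 1) i) →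
      (∀ t ∈ Finset.Icc 1 T, ∑ i, w i * x t i ≤ b t) →
      ∃ x' : ℕ → Fin n → ℝ,
        (∀ t' ∈ Finset.Icc 1 (∑ t ∈ Finset.Icc 1 T, Δ t), ∀ i,
          x' t' i = 0 ∨ x' t' i = 1) ∧
        (∀ t', 1 ≤ t' → t' < ∑ t ∈ Finset.Icc 1 T, Δ t → ∀ i,
          x' t' i ≤ x' (t' + 1) i) ∧
        (∀ t' ∈ Finset.Icc 1 (∑ t ∈ Finset.Icc 1 T, Δ t),
          ∑ i, w i * x' t' i ≤ b' t') ∧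
        (∑ t' ∈ Finset.Icc 1 (∑ t ∈ Finset.Icc 1 T, Δ t), ∑ i, p i * x' t' i =
          ∑ t ∈ Finset.Icc 1 T, (Δ t : ℝ) * ∑ i, p i * x t i)) ∧
    -- (b)
    (∀ xh : ℕ → Fin n → ℝ,
      (∀ t' ∈ Finset.Icc 1 (∑ t ∈ Finset.Icc 1 T, Δ t), ∀ i,
        xh t' i = 0 ∨ xh t' i = 1) →
      (∀ t', 1 ≤ t' → t' < ∑ t ∈ Finset.Icc 1 T, Δ t → ∀ i,
        xh t' i ≤ xh (t' + 1) i) →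
      (∀ t' ∈ Finset.Icc 1 (∑ t ∈ Finset.Icc 1 T, Δ t),
        ∑ i, w i * xh t' i ≤ b' t') →
      (∀ t ∈ Finset.Icc 1 T,
        ∑ i, w i * xh ((∑ s ∈ Finset.Icc 1 (t - 1), Δ s) + Δ t) i ≤ b t) ∧
      (∀ t, 1 ≤ t → t < T → ∀ i,
        xh ((∑ s ∈ Finset.Icc 1 (t - 1), Δ s) + Δ t) i ≤
          xh ((∑ s ∈ Finset.Icc 1 t, Δ s) + Δ (t + 1)) i) ∧
      (∑ t' ∈ Finset.Icc 1 (∑ t ∈ Finset.Icc 1 T, Δ t), ∑ i, p i * xh t' i ≤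
        ∑ t ∈ Finset.Icc 1 T, (Δ t : ℝ) *
          ∑ i, p i * xh ((∑ s ∈ Finset.Icc 1 (t - 1), Δ s) + Δ t) i)) := by
  refine ⟨fun x hbin hmono hcap => ?_, fun xh hbin hmono hcap => ?_⟩
  · have hmono' := (monotoneOn_Icc_of_le_add_one (f := x) fun t h1 h2 => hmono t h1 h2).comp
      (monotoneOn_blockIndex Δ T) fun t' ht' => by simpa using blockIndex_mem_Icc Δ (mem_Icc.2 ht')
    refine ⟨fun t' => x (blockIndex Δ t'), fun t' ht' => hbin _ (blockIndex_mem_Icc Δ ht'),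
      fun t' h1 h2 => hmono' ⟨h1, h2.le⟩ ⟨by omega, h2⟩ t'.le_succ, fun t' ht' => ?_, ?_⟩
    · obtain ⟨t, ht, hblock⟩ := exists_mem_Ioc_of_mem_Icc Δ ht'
      show ∑ i, w i * x (blockIndex Δ t') i ≤ b' t'
      rw [blockIndex_eq_of_mem_Ioc Δ hblock]
      rw [mem_Ioc, ← sum_Icc_one_sub_one_add Δ (mem_Icc.1 ht).1] at hblock
      exact hb' t ht t' hblock.1 hblock.2 ▸ hcap t ht
    · simpa [nsmul_eq_mul] using sum_Icc_comp_blockIndex Δ (fun t => ∑ i, p i * x t i) T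
  · have hmono' := monotoneOn_Icc_of_le_add_one (f := xh) fun t h1 h2 => hmono t h1 h2
    have hblockEnd := fun t ht => sum_Icc_one_sub_one_add_mem_Icc Δ ht (hΔ t ht)
    refine ⟨fun t ht => ?_, fun t h1 h2 => ?_, ?_⟩
    · rw [← hb' t ht _ (Nat.add_le_add_left (hΔ t ht) _) le_rfl]
      exact hcap _ (hblockEnd t ht)
    · have hnext := hblockEnd (t + 1) (mem_Icc.2 ⟨by omega, h2⟩)
      rw [Nat.add_sub_cancel] at hnext
      refine hmono' (by simpa using hblockEnd t (mem_Icc.2 ⟨h1, h2.le⟩)) (by simpa using hnext) ?_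
      rw [sum_Icc_one_sub_one_add Δ h1]
      exact Nat.le_add_right _ _
    · have hobj : MonotoneOn (fun t' => ∑ i, p i * xh t' i) (Set.Icc 1 (∑ s ∈ Icc 1 T, Δ s)) :=
        fun a ha c hc hac => sum_le_sum fun i _ =>
          mul_le_mul_of_nonneg_left (hmono' ha hc hac i) (hp i).le
      refine (sum_Icc_le_sum_smul_of_monotoneOn Δ hobj).trans_eq (sum_congr rfl fun t ht => ?_)
      rw [nsmul_eq_mul, sum_Icc_one_sub_one_add Δ (mem_Icc.1 ht).1]

/-- Strict approximation-preserving reduction from incremental knapsack (IK)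
with discounts `Δ` to IIK, replicating each time `t` exactly `Δ_t` times.
With `δ_t = Σ_{s<t} Δ_s` and `T' = Σ_t Δ_t`, capacities `b'_{t'} = b_t` for
`δ_t + 1 ≤ t' ≤ δ_t + Δ_t`:
(a) every feasible IK solution `x` yields a feasible IIK solution `x'` whose
IIK objective equals the IK objective of `x`;
(b) for every feasible IIK solution `x̂`, the solution `x̄_t := x̂_{δ_t + Δ_t}`
is feasible for IK with IK objective at least the IIK objective of `x̂`. -/
theorem IK_to_IIK_reduction (n T : ℕ) (p w : Fin n → ℝ) (b : ℕ → ℝ)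
    (hp : ∀ i, 0 < p i) (hw : ∀ i, 0 < w i)
    (Δ : ℕ → ℕ) (hΔ : ∀ t ∈ Finset.Icc 1 T, 0 < Δ t)
    (b' : ℕ → ℝ)
    (hb' : ∀ t ∈ Finset.Icc 1 T, ∀ t',
      (∑ s ∈ Finset.Icc 1 (t - 1), Δ s) + 1 ≤ t' →
      t' ≤ (∑ s ∈ Finset.Icc 1 (t - 1), Δ s) + Δ t → b' t' = b t) :
    -- (a)
    (∀ x : ℕ → Fin n → ℝ,
      (∀ t ∈ Finset.Icc 1 T, ∀ i, x t i = 0 ∨ x t i = 1) →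
      (∀ t, 1 ≤ t → t < T → ∀ i, x t i ≤ x (t + 1) i) →
      (∀ t ∈ Finset.Icc 1 T, ∑ i, w i * x t i ≤ b t) →
      ∃ x' : ℕ → Fin n → ℝ,
        (∀ t' ∈ Finset.Icc 1 (∑ t ∈ Finset.Icc 1 T, Δ t), ∀ i,
          x' t' i = 0 ∨ x' t' i = 1) ∧
        (∀ t', 1 ≤ t' → t' < ∑ t ∈ Finset.Icc 1 T, Δ t → ∀ i,
          x' t' i ≤ x' (t' + 1) i) ∧
        (∀ t' ∈ Finset.Icc 1 (∑ t ∈ Finset.Icc 1 T, Δ t),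
          ∑ i, w i * x' t' i ≤ b' t') ∧
        (∑ t' ∈ Finset.Icc 1 (∑ t ∈ Finset.Icc 1 T, Δ t), ∑ i, p i * x' t' i =
          ∑ t ∈ Finset.Icc 1 T, (Δ t : ℝ) * ∑ i, p i * x t i)) ∧
    -- (b)
    (∀ xh : ℕ → Fin n → ℝ,
      (∀ t' ∈ Finset.Icc 1 (∑ t ∈ Finset.Icc 1 T, Δ t), ∀ i,
        xh t' i = 0 ∨ xh t' i = 1) →
      (∀ t', 1 ≤ t' → t' < ∑ t ∈ Finset.Icc 1 T, Δ t → ∀ i,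
        xh t' i ≤ xh (t' + 1) i) →
      (∀ t' ∈ Finset.Icc 1 (∑ t ∈ Finset.Icc 1 T, Δ t),
        ∑ i, w i * xh t' i ≤ b' t') →
      (∀ t ∈ Finset.Icc 1 T,
        ∑ i, w i * xh ((∑ s ∈ Finset.Icc 1 (t - 1), Δ s) + Δ t) i ≤ b t) ∧
      (∀ t, 1 ≤ t → t < T → ∀ i,
        xh ((∑ s ∈ Finset.Icc 1 (t - 1), Δ s) + Δ t) i ≤
          xh ((∑ s ∈ Finset.Icc 1 t, Δ s) + Δ (t + 1)) i) ∧
      (∑ t' ∈ Finset.Icc 1 (∑ t ∈ Finset.Icc 1 T, Δ t), ∑ i, p i * xh t' i ≤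
        ∑ t ∈ Finset.Icc 1 T, (Δ t : ℝ) *
          ∑ i, p i * xh ((∑ s ∈ Finset.Icc 1 (t - 1), Δ s) + Δ t) i)) :=
  IK_to_IIK_reduction_general n T p w b hp Δ hΔ b' hb'
end
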